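/- Suppose u₋, u₊ : [0,π] → ℝ are C¹ functions such that every zero of u₊ - u₋ is simple (i.e., (u₊-u₋)'(x) ≠ 0 whenever (u₊-u₋)(x) = 0), and similarly for C¹ functions v₋, v₊, with u₊ - u₋ and v₊ - v₋ having exactly the same zero set in [0,π]. Then the function l : [0,π] → ℝ defined by l(x) = (u₊(x)-u₋(x))/(v₊(x)-v₋(x)) when v₊(x) ≠ v₋(x) and l(x) = (u₊-u₋)'(x)/(v₊-v₋)'(x) when v₊(x) = v₋(x), is continuous and nowhere zero on [0,π]. -/

import Mathlib

/-!
Away from the zeros of `g = v₊ - v₋` the coefficient is the quotient `f / g` of continuous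
functions, `f = u₊ - u₋`. At a common zero `x`, `f y / g y` is the ratio of the difference
quotients of `f` and `g` at `x`, which tends to `f' x / g' x`; since `g' x ≠ 0`, `g` does not
vanish on a punctured neighbourhood of `x`, so `l` agrees there with `f / g`.
-/

open Filter Topology

section

variable {𝕜 : Type*} [NontriviallyNormedField 𝕜]

open Classical in
noncomputable def lhopitalDiv (f g : 𝕜 → 𝕜) (x : 𝕜) : 𝕜 :=
  if g x = 0 then deriv f x / deriv g x else f x / g x

theorem HasDerivAt.tendsto_div_of_eq_zero {f g : 𝕜 → 𝕜} {f' g' x : 𝕜}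
    (hf : HasDerivAt f f' x) (hg : HasDerivAt g g' x) (hfx : f x = 0) (hgx : g x = 0)
    (hg' : g' ≠ 0) : Tendsto (fun y => f y / g y) (𝓝[≠] x) (𝓝 (f' / g')) := by
  have hslope := (hasDerivAt_iff_tendsto_slope.mp hf).div (hasDerivAt_iff_tendsto_slope.mp hg) hg'
  refine hslope.congr' (eventually_nhdsWithin_of_forall fun y (hy : y ≠ x) => ?_)
  have hyx : (y - x)⁻¹ ≠ 0 := inv_ne_zero (sub_ne_zero.mpr hy)
  simp only [Pi.div_apply, slope_def_field, hfx, hgx, sub_zero, div_eq_inv_mul (f y),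
    div_eq_inv_mul (g y), mul_div_mul_left _ _ hyx]

theorem continuousAt_lhopitalDiv {f g : 𝕜 → 𝕜} {x : 𝕜}
    (hf : DifferentiableAt 𝕜 f x) (hg : DifferentiableAt 𝕜 g x)
    (hzero : g x = 0 → f x = 0 ∧ deriv g x ≠ 0) : ContinuousAt (lhopitalDiv f g) x := by
  by_cases hgx : g x = 0
  · obtain ⟨hfx, hg'⟩ := hzero hgx
    have hpunct : Tendsto (lhopitalDiv f g) (𝓝[≠] x) (𝓝 (lhopitalDiv f g x)) := by
      rw [lhopitalDiv, if_pos hgx]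
      refine (hf.hasDerivAt.tendsto_div_of_eq_zero hg.hasDerivAt hfx hgx hg').congr' ?_
      filter_upwards [hg.hasDerivAt.eventually_ne (c := 0) hg'] with y hy
      rw [lhopitalDiv, if_neg hy]
    rw [ContinuousAt, ← nhdsNE_sup_pure x]
    exact hpunct.sup (tendsto_pure_nhds _ x)
  · have hquot : ContinuousAt (fun y => f y / g y) x := hf.continuousAt.div hg.continuousAt hgx
    refine hquot.congr ?_
    filter_upwards [hg.continuousAt.eventually_ne hgx] with y hy
    rw [lhopitalDiv, if_neg hy]

theorem lhopitalDiv_ne_zero {f g : 𝕜 → 𝕜} {x : 𝕜} (hzero : f x = 0 ↔ g x = 0)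
    (hf' : f x = 0 → deriv f x ≠ 0) (hg' : g x = 0 → deriv g x ≠ 0) :
    lhopitalDiv f g x ≠ 0 := by
  unfold lhopitalDiv
  split_ifs with hgx
  · exact div_ne_zero (hf' (hzero.mpr hgx)) (hg' hgx)
  · exact div_ne_zero (mt hzero.mp hgx) hgx

end

/-- If all zeros of up - um and of vp - vm in [0,π] are simple and the two
differences have the same zero set in [0,π], then the coefficient
l(x) = (up-um)(x)/(vp-vm)(x) (resp. the quotient of derivatives at common zeros)
is continuous and nowhere zero on [0,π]. -/
theorem stmt5 (um up vm vp : ℝ → ℝ)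
    (hu : ContDiff ℝ 1 um) (hu' : ContDiff ℝ 1 up)
    (hv : ContDiff ℝ 1 vm) (hv' : ContDiff ℝ 1 vp)
    (hsimpleu : ∀ x ∈ Set.Icc (0 : ℝ) Real.pi,
      up x - um x = 0 → deriv (fun y => up y - um y) x ≠ 0)
    (hsimplev : ∀ x ∈ Set.Icc (0 : ℝ) Real.pi,
      vp x - vm x = 0 → deriv (fun y => vp y - vm y) x ≠ 0)
    (hzero : ∀ x ∈ Set.Icc (0 : ℝ) Real.pi, (up x - um x = 0 ↔ vp x - vm x = 0))
    (l : ℝ → ℝ)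
    (hl : ∀ x, l x = if vp x = vm x
      then deriv (fun y => up y - um y) x / deriv (fun y => vp y - vm y) x
      else (up x - um x) / (vp x - vm x)) :
    ContinuousOn l (Set.Icc (0 : ℝ) Real.pi) ∧
      ∀ x ∈ Set.Icc (0 : ℝ) Real.pi, l x ≠ 0 := by
  have hl_eq : l = lhopitalDiv (fun y => up y - um y) (fun y => vp y - vm y) := by
    funext x
    simp only [hl, lhopitalDiv, sub_eq_zero]
  have hf : Differentiable ℝ fun y => up y - um y := (hu'.sub hu).differentiable one_ne_zero
  have hg : Differentiable ℝ fun y => vp y - vm y := (hv'.sub hv).differentiable one_ne_zero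
  subst hl_eq
  refine ⟨fun x hx => ?_, fun x hx => ?_⟩
  · refine (continuousAt_lhopitalDiv (hf x) (hg x) fun hgx => ?_).continuousWithinAt
    exact ⟨(hzero x hx).mpr hgx, hsimplev x hx hgx⟩
  · exact lhopitalDiv_ne_zero (hzero x hx) (hsimpleu x hx) (hsimplev x hx)
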